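/- arXiv:1911.06350 — 4 statements merged into one kernel-verified Lean document; each statement's English description precedes it below -/
import Mathlib

section
/- Let Σ be a d×d symmetric positive definite matrix, b ∈ ℝ^d with at least one positive component, and let b̃ be the unique solution to min_{x ≥ b} x^⊤ Σ^{-1} x. Set w = Σ^{-1} b̃. Then w ∈ [0,∞)^d, w^⊤ b = b̃^⊤ Σ^{-1} b̃ > 0, and (w^⊤ b)^2 / (w^⊤ Σ w) = min_{x ≥ b} x^⊤ Σ^{-1} x; in particular the supremum of (z^⊤ b)^2/(z^⊤ Σ z) over z ∈ [0,∞)^d with z^⊤ b > 0 is attained at z = w and equals min_{x ≥ b} x^⊤ Σ^{-1} x. -/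
/-!
The first-order optimality condition for `x ↦ xᵀ Σ⁻¹ x` on the convex box `{x ≥ b}` at `b̃`,
tested against `b̃ + eᵢ` and against `b`, gives `w = Σ⁻¹ b̃ ≥ 0` and `wᵀ b̃ = wᵀ b`. As `Σ w = b̃`,
also `wᵀ Σ w = wᵀ b̃`, which gives the value of the ratio at `w`. For `z ≥ 0` we have
`zᵀ b ≤ zᵀ b̃ = zᵀ Σ w`, and Cauchy–Schwarz for the form of `Σ` bounds `(zᵀ Σ w)² / zᵀ Σ z`
by `wᵀ Σ w`.
-/

open Matrix

section QuadraticForm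

variable {n : Type*} [Fintype n] {A : Matrix n n ℝ}

lemma Matrix.IsHermitian.dotProduct_mulVec_comm (hA : A.IsHermitian) (x y : n → ℝ) :
    x ⬝ᵥ (A *ᵥ y) = y ⬝ᵥ (A *ᵥ x) := by
  rw [dotProduct_mulVec, ← vecMul_transpose, ← conjTranspose_eq_transpose_of_trivial, hA.eq,
    dotProduct_comm]

lemma Matrix.IsHermitian.dotProduct_mulVec_add_smul (hA : A.IsHermitian) (x v : n → ℝ) (t : ℝ) :
    (x + t • v) ⬝ᵥ (A *ᵥ (x + t • v)) =
      x ⬝ᵥ (A *ᵥ x) + 2 * t * ((A *ᵥ x) ⬝ᵥ v) + t ^ 2 * (v ⬝ᵥ (A *ᵥ v)) := by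
  simp only [mulVec_add, mulVec_smul, dotProduct_add, add_dotProduct, dotProduct_smul,
    smul_dotProduct, smul_eq_mul]
  rw [hA.dotProduct_mulVec_comm x v, dotProduct_comm v (A *ᵥ x)]
  ring

lemma nonneg_of_forall_two_mul_add_sq_mul_nonneg {c a : ℝ}
    (h : ∀ t ∈ Set.Ioc (0 : ℝ) 1, 0 ≤ 2 * t * c + t ^ 2 * a) : 0 ≤ c := by
  by_contra! hc
  -- at `t = -c / (|a| - c)` the linear term dominates the quadratic one
  set t := -c / (|a| - c) with ht
  have hden : 0 < |a| - c := by linarith [abs_nonneg a]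
  have htpos : 0 < t := div_pos (neg_pos.mpr hc) hden
  have hta : t * |a| ≤ -c := by
    rw [ht, div_mul_eq_mul_div, div_le_iff₀ hden]
    nlinarith [abs_nonneg a]
  have hquad : t ^ 2 * a ≤ t * -c := calc
    t ^ 2 * a ≤ t ^ 2 * |a| := mul_le_mul_of_nonneg_left (le_abs_self a) (sq_nonneg t)
    _ = t * (t * |a|) := by ring
    _ ≤ t * -c := mul_le_mul_of_nonneg_left hta htpos.le
  have := h t ⟨htpos, by rw [ht, div_le_one hden]; linarith [abs_nonneg a]⟩
  nlinarith

lemma Matrix.IsHermitian.dotProduct_sub_nonneg_of_isMinOn (hA : A.IsHermitian)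
    {s : Set (n → ℝ)} (hs : Convex ℝ s) {x y : n → ℝ}
    (hmin : IsMinOn (fun v ↦ v ⬝ᵥ (A *ᵥ v)) s x) (hx : x ∈ s) (hy : y ∈ s) :
    0 ≤ (A *ᵥ x) ⬝ᵥ (y - x) := by
  refine nonneg_of_forall_two_mul_add_sq_mul_nonneg (a := (y - x) ⬝ᵥ (A *ᵥ (y - x)))
    fun t ⟨ht0, ht1⟩ ↦ ?_
  have hle : x ⬝ᵥ (A *ᵥ x) ≤ (x + t • (y - x)) ⬝ᵥ (A *ᵥ (x + t • (y - x))) :=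
    hmin (hs.add_smul_sub_mem hx hy ⟨ht0.le, ht1⟩)
  rw [hA.dotProduct_mulVec_add_smul] at hle
  linarith

variable {b x : n → ℝ}

lemma Matrix.IsHermitian.mulVec_nonneg_of_isMinOn_Ici [DecidableEq n] (hA : A.IsHermitian)
    (hmin : IsMinOn (fun v ↦ v ⬝ᵥ (A *ᵥ v)) (Set.Ici b) x) (hx : b ≤ x) : 0 ≤ A *ᵥ x := by
  intro i
  have hy : b ≤ x + Pi.single i 1 :=
    hx.trans (le_add_of_nonneg_right (Pi.single_nonneg.mpr zero_le_one))
  simpa using hA.dotProduct_sub_nonneg_of_isMinOn (convex_Ici b) hmin hx hy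

-- complementary slackness, summed over the coordinates
lemma Matrix.IsHermitian.mulVec_dotProduct_eq_of_isMinOn_Ici [DecidableEq n] (hA : A.IsHermitian)
    (hmin : IsMinOn (fun v ↦ v ⬝ᵥ (A *ᵥ v)) (Set.Ici b) x) (hx : b ≤ x) :
    (A *ᵥ x) ⬝ᵥ x = (A *ᵥ x) ⬝ᵥ b := by
  have hle := dotProduct_le_dotProduct_of_nonneg_left hx (hA.mulVec_nonneg_of_isMinOn_Ici hmin hx)
  have hge := hA.dotProduct_sub_nonneg_of_isMinOn (convex_Ici b) hmin hx (le_refl b)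
  rw [dotProduct_sub] at hge
  linarith

lemma Matrix.PosSemidef.sq_dotProduct_mulVec_le (hA : A.PosSemidef) (x y : n → ℝ) :
    (x ⬝ᵥ (A *ᵥ y)) ^ 2 ≤ (x ⬝ᵥ (A *ᵥ x)) * (y ⬝ᵥ (A *ᵥ y)) := by
  classical
  have := LinearMap.BilinForm.apply_mul_apply_le_of_forall_zero_le (toLinearMap₂' ℝ A)
    (fun v ↦ by simpa [toLinearMap₂'_apply'] using hA.dotProduct_mulVec_nonneg v) x y
  simp only [toLinearMap₂'_apply', hA.isHermitian.dotProduct_mulVec_comm y x] at this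
  rwa [sq]

lemma Matrix.PosSemidef.sq_dotProduct_mulVec_div_le (hA : A.PosSemidef) (x y : n → ℝ) :
    (x ⬝ᵥ (A *ᵥ y)) ^ 2 / (x ⬝ᵥ (A *ᵥ x)) ≤ y ⬝ᵥ (A *ᵥ y) := by
  have hx : 0 ≤ x ⬝ᵥ (A *ᵥ x) := by simpa using hA.dotProduct_mulVec_nonneg x
  rcases hx.eq_or_lt with hx0 | hxpos
  · rw [← hx0, div_zero]
    simpa using hA.dotProduct_mulVec_nonneg y
  · rw [div_le_iff₀ hxpos, mul_comm]
    exact hA.sq_dotProduct_mulVec_le x y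

end QuadraticForm

theorem stmt_3_general (d : ℕ) (S : Matrix (Fin d) (Fin d) ℝ)
    (hS : S.PosDef) (b : Fin d → ℝ) (hb : ∃ i, 0 < b i)
    (btil : Fin d → ℝ) (hbtil : (∀ i, b i ≤ btil i) ∧
      ∀ y : Fin d → ℝ, (∀ i, b i ≤ y i) →
        btil ⬝ᵥ (S⁻¹ *ᵥ btil) ≤ y ⬝ᵥ (S⁻¹ *ᵥ y))
    (w : Fin d → ℝ) (hw : w = S⁻¹ *ᵥ btil) :
    (∀ i, 0 ≤ w i) ∧
    w ⬝ᵥ b = btil ⬝ᵥ (S⁻¹ *ᵥ btil) ∧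
    0 < btil ⬝ᵥ (S⁻¹ *ᵥ btil) ∧
    (w ⬝ᵥ b) ^ 2 / (w ⬝ᵥ (S *ᵥ w)) = btil ⬝ᵥ (S⁻¹ *ᵥ btil) ∧
    (∀ z : Fin d → ℝ, (∀ i, 0 ≤ z i) → 0 < z ⬝ᵥ b →
      (z ⬝ᵥ b) ^ 2 / (z ⬝ᵥ (S *ᵥ z)) ≤ (w ⬝ᵥ b) ^ 2 / (w ⬝ᵥ (S *ᵥ w))) := by
  obtain ⟨hfeas, hmin⟩ := hbtil
  have hinv : S⁻¹.IsHermitian := hS.inv.isHermitian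
  have hmin' : IsMinOn (fun v ↦ v ⬝ᵥ (S⁻¹ *ᵥ v)) (Set.Ici b) btil := fun y hy ↦ hmin y hy
  have hSw : S *ᵥ w = btil := by
    rw [hw, mulVec_mulVec, mul_nonsing_inv _ ((isUnit_iff_isUnit_det S).mp hS.isUnit), one_mulVec]
  have hwb : w ⬝ᵥ b = btil ⬝ᵥ (S⁻¹ *ᵥ btil) := by
    rw [hw, ← hinv.mulVec_dotProduct_eq_of_isMinOn_Ici hmin' hfeas, dotProduct_comm]
  have hwSw : w ⬝ᵥ (S *ᵥ w) = btil ⬝ᵥ (S⁻¹ *ᵥ btil) := by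
    rw [hSw, hw, dotProduct_comm]
  have hbtil : btil ≠ 0 := by
    obtain ⟨i, hi⟩ := hb
    rintro rfl
    exact lt_irrefl 0 (hi.trans_le (hfeas i))
  have hpos : 0 < btil ⬝ᵥ (S⁻¹ *ᵥ btil) := by simpa using hS.inv.dotProduct_mulVec_pos hbtil
  have hratio : (w ⬝ᵥ b) ^ 2 / (w ⬝ᵥ (S *ᵥ w)) = btil ⬝ᵥ (S⁻¹ *ᵥ btil) := by
    rw [hwb, hwSw, sq, mul_self_div_self]
  refine ⟨fun i ↦ hw ▸ hinv.mulVec_nonneg_of_isMinOn_Ici hmin' hfeas i, hwb, hpos, hratio,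
    fun z hz hzb ↦ ?_⟩
  have hzbtil : z ⬝ᵥ b ≤ z ⬝ᵥ (S *ᵥ w) := hSw ▸ dotProduct_le_dotProduct_of_nonneg_left hfeas hz
  rw [hratio, ← hwSw]
  calc (z ⬝ᵥ b) ^ 2 / (z ⬝ᵥ (S *ᵥ z)) ≤ (z ⬝ᵥ (S *ᵥ w)) ^ 2 / (z ⬝ᵥ (S *ᵥ z)) := by
        gcongr
        simpa using hS.posSemidef.dotProduct_mulVec_nonneg z
    _ ≤ w ⬝ᵥ (S *ᵥ w) := hS.posSemidef.sq_dotProduct_mulVec_div_le z w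

/-- Properties of the dual solution `w = Σ⁻¹ b̃` of the quadratic program `Π_Σ(b)`:
`w ≥ 0`, `wᵀ b = b̃ᵀ Σ⁻¹ b̃ > 0`, and `(wᵀ b)²/(wᵀ Σ w)` equals the minimal value,
so the supremum of `(zᵀ b)²/(zᵀ Σ z)` over nonnegative `z` with `zᵀ b > 0` is
attained at `z = w`. -/
theorem stmt_3 (d : ℕ) (S : Matrix (Fin d) (Fin d) ℝ)
    (hS : S.PosDef) (hsymm : S.IsSymm) (b : Fin d → ℝ) (hb : ∃ i, 0 < b i)
    (btil : Fin d → ℝ) (hbtil : (∀ i, b i ≤ btil i) ∧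
      ∀ y : Fin d → ℝ, (∀ i, b i ≤ y i) →
        btil ⬝ᵥ (S⁻¹ *ᵥ btil) ≤ y ⬝ᵥ (S⁻¹ *ᵥ y))
    (w : Fin d → ℝ) (hw : w = S⁻¹ *ᵥ btil) :
    (∀ i, 0 ≤ w i) ∧
    w ⬝ᵥ b = btil ⬝ᵥ (S⁻¹ *ᵥ btil) ∧
    0 < btil ⬝ᵥ (S⁻¹ *ᵥ btil) ∧
    (w ⬝ᵥ b) ^ 2 / (w ⬝ᵥ (S *ᵥ w)) = btil ⬝ᵥ (S⁻¹ *ᵥ btil) ∧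
    (∀ z : Fin d → ℝ, (∀ i, 0 ≤ z i) → 0 < z ⬝ᵥ b →
      (z ⬝ᵥ b) ^ 2 / (z ⬝ᵥ (S *ᵥ z)) ≤ (w ⬝ᵥ b) ^ 2 / (w ⬝ᵥ (S *ᵥ w))) :=
  stmt_3_general d S hS b hb btil hbtil w hw
end

section
/- Let v ∈ ℝ^d with a := Σ_{i=1}^d v_i ≥ 0, and let Λ ≥ 0. Define b := Σ_{i=1}^d max(0, −v_i). Then ∫_{ℝ^d} exp(Σ_i x_i) · 1{∃ t ∈ [0,Λ] : x < −t v (componentwise strict)} dx equals 1 + Λ b if a = 0, and equals 1 + ((1 − e^{−aΛ})/a) b if a > 0. -/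
/-!
Write `Ω_t = {x | x < -t v}` and `I` for the measure with density `e^{∑ xᵢ}`. If `s ≤ t ≤ u`
then `Ω_s ∩ Ω_u ⊆ Ω_t`, so for a grid
`0 = t₀ < t₁ < ⋯ < t_N = Λ` inclusion–exclusion collapses to consecutive pairs:
`I(⋃ₖ Ω_{tₖ}) = ∑ₖ I(Ω_{tₖ}) - ∑ₖ I(Ω_{tₖ} ∩ Ω_{tₖ₊₁})`. With `I(Ω_t) = e^{-at}` and
`I(Ω_s ∩ Ω_t) = e^{-at - (t-s)b}` for `s ≤ t`, on the uniform grid of step `δ = Λ/N` this equals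
`1 + (1 - e^{-bδ}) ∑_{k<N} e^{-a(k+1)δ}`. Membership `x ∈ Ω_t` is an open condition in `t`,
so the dyadic grids exhaust `Ω`, and letting `N → ∞` the sum tends to `b ∫₀^Λ e^{-as} ds`.
-/

open MeasureTheory Set Filter Topology Real

theorem measure_biUnion_le_add_sum_inter_succ {α : Type*} [MeasurableSpace α] (μ : Measure α)
    {S : ℕ → Set α} (hS : ∀ n, MeasurableSet (S n))
    (hconv : ∀ ⦃i j k⦄, i ≤ j → j ≤ k → S i ∩ S k ⊆ S j) (n : ℕ) :
    μ (⋃ k ≤ n, S k) + ∑ k ∈ Finset.range n, μ (S k ∩ S (k + 1)) =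
      ∑ k ∈ Finset.range (n + 1), μ (S k) := by
  induction n with
  | zero => simp
  | succ n ih =>
    have hinter : (⋃ k ≤ n, S k) ∩ S (n + 1) = S n ∩ S (n + 1) := by
      refine Subset.antisymm ?_
        (inter_subset_inter_left _ (subset_biUnion_of_mem (u := S) (show n ≤ n from le_rfl)))
      rintro x ⟨hx, hxn⟩
      obtain ⟨k, hk, hxk⟩ := mem_iUnion₂.mp hx
      exact ⟨hconv hk n.le_succ ⟨hxk, hxn⟩, hxn⟩
    rw [Finset.sum_range_succ, ← add_assoc, add_right_comm, biUnion_le_succ, ← hinter,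
      measure_union_add_inter _ (hS _), add_right_comm, ih, Finset.sum_range_succ _ (n + 1)]

theorem ENNReal.toReal_eq_of_tendsto {u : ℕ → ENNReal} {x : ENNReal} {L : ℝ}
    (hu : Tendsto u atTop (𝓝 x)) (hfin : ∀ n, u n ≠ ⊤)
    (hL : Tendsto (fun n => (u n).toReal) atTop (𝓝 L)) : x.toReal = L := by
  have hL' : Tendsto u atTop (𝓝 (ENNReal.ofReal L)) := by
    simpa only [ENNReal.ofReal_toReal (hfin _)] using ENNReal.tendsto_ofReal hL
  rw [tendsto_nhds_unique hu hL', ENNReal.toReal_ofReal]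
  exact ge_of_tendsto' hL fun n => ENNReal.toReal_nonneg

theorem HasDerivAt.tendsto_nat_mul_comp_div {f : ℝ → ℝ} {f' : ℝ} (hf : HasDerivAt f f' 0)
    (hf0 : f 0 = 0) (x : ℝ) : Tendsto (fun N : ℕ => N * f (x / N)) atTop (𝓝 (f' * x)) := by
  rcases eq_or_ne x 0 with rfl | hx
  · simp [hf0]
  have hdiv : Tendsto (fun N : ℕ => x / N) atTop (𝓝[≠] 0) :=
    tendsto_nhdsWithin_iff.mpr ⟨tendsto_const_div_atTop_nhds_zero_nat x,
      (eventually_ne_atTop 0).mono fun N hN => div_ne_zero hx (Nat.cast_ne_zero.mpr hN)⟩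
  refine ((hasDerivAt_iff_tendsto_slope.mp hf).comp hdiv |>.mul_const x).congr' ?_
  filter_upwards [eventually_ne_atTop 0] with N hN
  simp only [Function.comp_apply, slope_def_field, hf0, sub_zero]
  field_simp

theorem tendsto_nat_mul_one_sub_exp_neg_mul_div (c x : ℝ) :
    Tendsto (fun N : ℕ => N * (1 - exp (-c * (x / N)))) atTop (𝓝 (c * x)) := by
  have hderiv : HasDerivAt (fun y => 1 - exp (-c * y)) c 0 := by
    simpa using (((hasDerivAt_id' (0 : ℝ)).const_mul (-c)).exp).const_sub 1
  exact hderiv.tendsto_nat_mul_comp_div (by simp) x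

section Grid

variable {α : Type*} (Ω : ℝ → Set α)

def gridUnion (Λ : ℝ) (N : ℕ) : Set α := ⋃ (k : ℕ) (_ : k ≤ N), Ω (k * (Λ / N))

theorem monotone_gridUnion_two_pow (Λ : ℝ) : Monotone fun m : ℕ => gridUnion Ω Λ (2 ^ m) := by
  refine monotone_nat_of_le_succ fun m => iUnion₂_subset fun k hk => ?_
  have hgrid : (k : ℝ) * (Λ / (2 ^ m : ℕ)) = ((2 * k : ℕ) : ℝ) * (Λ / (2 ^ (m + 1) : ℕ)) := by
    push_cast
    field_simp
    ring
  rw [hgrid]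
  exact subset_biUnion_of_mem (u := fun k : ℕ => Ω (k * (Λ / (2 ^ (m + 1) : ℕ))))
    (show 2 * k ≤ 2 ^ (m + 1) by rw [pow_succ]; omega)

theorem tendsto_nat_floor_mul_two_pow_div {t Λ : ℝ} (ht : 0 ≤ t) (hΛ : 0 < Λ) :
    Tendsto (fun m : ℕ => ⌊t * 2 ^ m / Λ⌋₊ * (Λ / 2 ^ m)) atTop (𝓝 t) := by
  have hstep : Tendsto (fun m : ℕ => Λ / 2 ^ m) atTop (𝓝 0) :=
    tendsto_const_nhds.div_atTop (tendsto_pow_atTop_atTop_of_one_lt one_lt_two)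
  have hcancel (m : ℕ) : t * 2 ^ m / Λ * (Λ / 2 ^ m) = t := by field_simp
  refine tendsto_of_tendsto_of_tendsto_of_le_of_le (by simpa using tendsto_const_nhds.sub hstep)
    tendsto_const_nhds (fun m => ?_) (fun m => ?_)
  · have := mul_lt_mul_of_pos_right (Nat.lt_floor_add_one (t * 2 ^ m / Λ))
      (show 0 < Λ / 2 ^ m by positivity)
    rw [add_mul, one_mul, hcancel] at this
    exact (sub_lt_iff_lt_add.mpr this).le
  · calc _ ≤ t * 2 ^ m / Λ * (Λ / 2 ^ m) := by gcongr; exact Nat.floor_le (by positivity)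
      _ = t := hcancel m

theorem iUnion_gridUnion_two_pow (hΩ : ∀ x, IsOpen {t | x ∈ Ω t}) {Λ : ℝ} (hΛ : 0 ≤ Λ) :
    ⋃ m : ℕ, gridUnion Ω Λ (2 ^ m) = ⋃ t ∈ Icc 0 Λ, Ω t := by
  simp only [gridUnion, Nat.cast_pow, Nat.cast_ofNat]
  refine Subset.antisymm (iUnion_subset fun m => iUnion₂_subset fun k hk => ?_) ?_
  · refine subset_biUnion_of_mem (u := Ω) ⟨by positivity, ?_⟩
    calc (k : ℝ) * (Λ / 2 ^ m) ≤ 2 ^ m * (Λ / 2 ^ m) := by gcongr; exact_mod_cast hk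
      _ = Λ := by field_simp
  rintro x hx
  obtain ⟨t, ⟨ht0, htΛ⟩, hxt⟩ := mem_iUnion₂.mp hx
  rcases hΛ.eq_or_lt with rfl | hΛ
  · obtain rfl : t = 0 := le_antisymm htΛ ht0
    exact mem_iUnion.mpr ⟨0, mem_iUnion₂.mpr ⟨0, Nat.zero_le _, by simpa using hxt⟩⟩
  obtain ⟨m, hm⟩ := ((tendsto_nat_floor_mul_two_pow_div ht0 hΛ).eventually
    ((hΩ x).mem_nhds hxt)).exists
  refine mem_iUnion.mpr ⟨m, mem_iUnion₂.mpr ⟨_, Nat.floor_le_of_le ?_, hm⟩⟩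
  rw [div_le_iff₀ hΛ]
  push_cast
  nlinarith [pow_pos (two_pos (α := ℝ)) m]

end Grid

section Orthant

variable {ι : Type*}

def lowerOrthant (p : ι → ℝ) : Set (ι → ℝ) := univ.pi fun i => Iio (p i)

theorem lowerOrthant_inter_lowerOrthant (p q : ι → ℝ) :
    lowerOrthant p ∩ lowerOrthant q = lowerOrthant (p ⊓ q) := by
  simp only [lowerOrthant, ← pi_inter_distrib, Iio_inter_Iio, Pi.inf_apply]

theorem lowerOrthant_mono {p q : ι → ℝ} (h : p ≤ q) : lowerOrthant p ⊆ lowerOrthant q :=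
  pi_mono fun i _ => Iio_subset_Iio (h i)

theorem lowerOrthant_smul_inter_subset (v : ι → ℝ) {s u t : ℝ} (hsu : s ≤ u) (hut : u ≤ t) :
    lowerOrthant (-s • v) ∩ lowerOrthant (-t • v) ⊆ lowerOrthant (-u • v) := by
  rw [lowerOrthant_inter_lowerOrthant]
  refine lowerOrthant_mono fun i => ?_
  simp only [Pi.inf_apply, Pi.smul_apply, smul_eq_mul]
  rcases le_total 0 (v i) with h | h
  · exact min_le_of_right_le (by nlinarith)
  · exact min_le_of_left_le (by nlinarith)

variable [Fintype ι]

theorem measurableSet_lowerOrthant (p : ι → ℝ) : MeasurableSet (lowerOrthant p) :=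
  MeasurableSet.univ_pi fun _ => measurableSet_Iio

theorem isOpen_setOf_mem_lowerOrthant_smul (v x : ι → ℝ) :
    IsOpen {t : ℝ | x ∈ lowerOrthant (-t • v)} := by
  simp only [lowerOrthant, mem_univ_pi, mem_Iio, Pi.smul_apply, smul_eq_mul, ofPred_forall]
  exact isOpen_iInter_of_finite fun i => isOpen_lt continuous_const (by fun_prop)

theorem sum_min_neg_mul (v : ι → ℝ) {s t : ℝ} (hst : s ≤ t) :
    ∑ i, min (-s * v i) (-t * v i) = -t * ∑ i, v i - (t - s) * ∑ i, max 0 (-v i) := by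
  rw [Finset.mul_sum, Finset.mul_sum, ← Finset.sum_sub_distrib]
  refine Finset.sum_congr rfl fun i _ => ?_
  rcases le_total 0 (v i) with h | h
  · rw [max_eq_left (by linarith), min_eq_right (by nlinarith)]; ring
  · rw [max_eq_right (by linarith), min_eq_left (by nlinarith)]; ring

end Orthant

section ExpMeasure

variable {ι : Type*} [Fintype ι]

noncomputable def expMeasure (ι : Type*) [Fintype ι] : Measure (ι → ℝ) :=
  volume.withDensity fun x => ENNReal.ofReal (exp (∑ i, x i))

theorem integral_indicator_exp_sum {S : Set (ι → ℝ)} (hS : MeasurableSet S) :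
    ∫ x, S.indicator (fun x => exp (∑ i, x i)) x = (expMeasure ι S).toReal := by
  rw [integral_eq_lintegral_of_nonneg_ae (.of_forall fun x => indicator_nonneg
      (fun y _ => (exp_pos _).le) x) ((by fun_prop : Measurable fun x : ι → ℝ =>
        exp (∑ i, x i)).indicator hS).aestronglyMeasurable,
    expMeasure, withDensity_apply _ hS, ← lintegral_indicator hS]
  congr 2 with x
  by_cases hx : x ∈ S <;> simp [hx]

theorem expMeasure_lowerOrthant (p : ι → ℝ) :
    expMeasure ι (lowerOrthant p) = ENNReal.ofReal (exp (∑ i, p i)) := by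
  have hprod : (lowerOrthant p).indicator (fun x => exp (∑ i, x i)) =
      fun x => ∏ i, (Iio (p i)).indicator exp (x i) := by
    ext x
    by_cases hx : x ∈ lowerOrthant p
    · rw [indicator_of_mem hx, exp_sum]
      exact Finset.prod_congr rfl fun i _ => (indicator_of_mem (hx i (mem_univ i)) _).symm
    · obtain ⟨i, hi⟩ : ∃ i, p i ≤ x i := by simpa [lowerOrthant] using hx
      rw [indicator_of_notMem hx, eq_comm]
      exact Finset.prod_eq_zero (Finset.mem_univ i)
        (indicator_of_notMem (show x i ∉ Iio (p i) from not_lt.mpr hi) _)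
  have hreal : (expMeasure ι (lowerOrthant p)).toReal = exp (∑ i, p i) := by
    rw [← integral_indicator_exp_sum (measurableSet_lowerOrthant p), hprod,
      integral_fintype_prod_volume_eq_prod, exp_sum]
    refine Finset.prod_congr rfl fun i _ => ?_
    rw [integral_indicator measurableSet_Iio, Measure.restrict_congr_set Iio_ae_eq_Iic,
      integral_exp_Iic]
  have hfin : expMeasure ι (lowerOrthant p) ≠ ⊤ := fun h => by
    simpa [h] using (exp_pos _).trans_eq hreal.symm
  rw [← hreal, ENNReal.ofReal_toReal hfin]

end ExpMeasure

noncomputable def gridExcess (a b Λ : ℝ) (N : ℕ) : ℝ :=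
  (1 - exp (-b * (Λ / N))) * ∑ k ∈ Finset.range N, exp (-a * (Λ / N)) ^ (k + 1)

theorem tendsto_gridExcess_zero (b Λ : ℝ) : Tendsto (gridExcess 0 b Λ) atTop (𝓝 (Λ * b)) := by
  rw [mul_comm]
  refine (tendsto_nat_mul_one_sub_exp_neg_mul_div b Λ).congr fun N => ?_
  simp [gridExcess, mul_comm]

theorem tendsto_gridExcess_of_ne_zero {a : ℝ} (ha : a ≠ 0) (b Λ : ℝ) :
    Tendsto (gridExcess a b Λ) atTop (𝓝 ((1 - exp (-a * Λ)) / a * b)) := by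
  rcases eq_or_ne Λ 0 with rfl | hΛ
  · simpa using tendsto_const_nhds.congr fun N => by simp [gridExcess]
  have hq : Tendsto (fun N : ℕ => exp (-a * (Λ / N))) atTop (𝓝 1) := by
    simpa using ((tendsto_const_div_atTop_nhds_zero_nat Λ).const_mul (-a)).rexp
  have hlim := ((tendsto_nat_mul_one_sub_exp_neg_mul_div b Λ).div
    (tendsto_nat_mul_one_sub_exp_neg_mul_div a Λ) (mul_ne_zero ha hΛ)).mul hq
    |>.mul_const (1 - exp (-a * Λ))
  convert hlim.congr' ?_ using 2
  · field_simp
  filter_upwards [eventually_ne_atTop 0] with N hN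
  have hqN : exp (-a * (Λ / N)) ^ N = exp (-a * Λ) := by
    rw [← exp_nat_mul]
    congr 1
    field_simp
  have hq1 : exp (-a * (Λ / N)) ≠ 1 := by simp [ha, hΛ, hN]
  simp only [Pi.div_apply, gridExcess, pow_succ, ← Finset.sum_mul]
  rw [geom_sum_eq hq1, hqN]
  generalize exp (-a * (Λ / N)) = q at hq1 ⊢
  have hq1' : q - 1 ≠ 0 := sub_ne_zero.mpr hq1
  have h1q : 1 - q ≠ 0 := sub_ne_zero.mpr hq1.symm
  field_simp
  ring

section GridMeasure

variable {ι : Type*} [Fintype ι] (v : ι → ℝ) {a b : ℝ}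

theorem expMeasure_gridUnion_add_sum (ha : a = ∑ i, v i) (hb : b = ∑ i, max 0 (-v i))
    {Λ : ℝ} (hΛ : 0 ≤ Λ) (N : ℕ) :
    expMeasure ι (gridUnion (fun t => lowerOrthant (-t • v)) Λ N) +
        ∑ k ∈ Finset.range N, ENNReal.ofReal (exp (-a * (Λ / N)) ^ (k + 1) * exp (-b * (Λ / N))) =
      ∑ k ∈ Finset.range (N + 1), ENNReal.ofReal (exp (-a * (Λ / N)) ^ k) := by
  set δ := Λ / N
  have hmono : Monotone fun k : ℕ => (k : ℝ) * δ := fun j k h => by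
    dsimp only
    gcongr
  have hS (k : ℕ) : expMeasure ι (lowerOrthant (-(k * δ) • v)) =
      ENNReal.ofReal (exp (-a * δ) ^ k) := by
    rw [expMeasure_lowerOrthant, ← exp_nat_mul, ha]
    simp only [Pi.smul_apply, smul_eq_mul, ← Finset.mul_sum]
    ring_nf
  have hSS (k : ℕ) : expMeasure ι (lowerOrthant (-(k * δ) • v) ∩
      lowerOrthant (-((k + 1 : ℕ) * δ) • v)) =
      ENNReal.ofReal (exp (-a * δ) ^ (k + 1) * exp (-b * δ)) := by
    rw [lowerOrthant_inter_lowerOrthant, expMeasure_lowerOrthant]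
    simp only [Pi.inf_apply, Pi.smul_apply, smul_eq_mul]
    rw [sum_min_neg_mul v (hmono k.le_succ), ← exp_nat_mul, ← exp_add, ← ha, ← hb]
    push_cast
    ring_nf
  simpa only [gridUnion, hS, hSS] using measure_biUnion_le_add_sum_inter_succ (expMeasure ι)
    (S := fun k : ℕ => lowerOrthant (-(k * δ) • v)) (fun k => measurableSet_lowerOrthant _)
    (fun i j k hij hjk => lowerOrthant_smul_inter_subset v (hmono hij) (hmono hjk)) N

theorem expMeasure_gridUnion_ne_top (ha : a = ∑ i, v i) (hb : b = ∑ i, max 0 (-v i))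
    {Λ : ℝ} (hΛ : 0 ≤ Λ) (N : ℕ) :
    expMeasure ι (gridUnion (fun t => lowerOrthant (-t • v)) Λ N) ≠ ⊤ :=
  ne_top_of_le_ne_top (ENNReal.sum_ne_top.mpr fun _ _ => ENNReal.ofReal_ne_top)
    (le_self_add.trans (expMeasure_gridUnion_add_sum v ha hb hΛ N).le)

theorem toReal_expMeasure_gridUnion (ha : a = ∑ i, v i) (hb : b = ∑ i, max 0 (-v i))
    {Λ : ℝ} (hΛ : 0 ≤ Λ) (N : ℕ) :
    (expMeasure ι (gridUnion (fun t => lowerOrthant (-t • v)) Λ N)).toReal =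
      1 + gridExcess a b Λ N := by
  have key := congrArg ENNReal.toReal (expMeasure_gridUnion_add_sum v ha hb hΛ N)
  have hq : 0 ≤ exp (-a * (Λ / N)) := (exp_pos _).le
  rw [ENNReal.toReal_add (expMeasure_gridUnion_ne_top v ha hb hΛ N)
      (ENNReal.sum_ne_top.mpr fun _ _ => ENNReal.ofReal_ne_top),
    ENNReal.toReal_sum fun _ _ => ENNReal.ofReal_ne_top,
    ENNReal.toReal_sum fun _ _ => ENNReal.ofReal_ne_top] at key
  simp only [ENNReal.toReal_ofReal (pow_nonneg hq _),
    ENNReal.toReal_ofReal (mul_nonneg (pow_nonneg hq _) (exp_pos _).le),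
    Finset.sum_range_succ', pow_zero, ← Finset.sum_mul] at key
  rw [gridExcess]
  linarith

end GridMeasure

theorem integral_indicator_exp_sum_eq_one_add {ι : Type*} [Fintype ι] (v : ι → ℝ) {a b Λ L : ℝ}
    (ha : a = ∑ i, v i) (hb : b = ∑ i, max 0 (-v i)) (hΛ : 0 ≤ Λ)
    (hL : Tendsto (gridExcess a b Λ) atTop (𝓝 L)) :
    ∫ x, {x : ι → ℝ | ∃ t ∈ Icc 0 Λ, ∀ i, x i < -t * v i}.indicator
      (fun x => exp (∑ i, x i)) x = 1 + L := by
  set Ω := fun t : ℝ => lowerOrthant (-t • v)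
  have hΩ : {x : ι → ℝ | ∃ t ∈ Icc 0 Λ, ∀ i, x i < -t * v i} = ⋃ m : ℕ, gridUnion Ω Λ (2 ^ m) := by
    rw [iUnion_gridUnion_two_pow Ω (isOpen_setOf_mem_lowerOrthant_smul v) hΛ]
    ext x
    simp [Ω, lowerOrthant]
  have hmeas (N : ℕ) : MeasurableSet (gridUnion Ω Λ N) :=
    .iUnion fun _ => .iUnion fun _ => measurableSet_lowerOrthant _
  rw [hΩ, integral_indicator_exp_sum (.iUnion fun m => hmeas _)]
  refine ENNReal.toReal_eq_of_tendsto
    (tendsto_measure_iUnion_atTop (monotone_gridUnion_two_pow Ω Λ))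
    (fun m => expMeasure_gridUnion_ne_top v ha hb hΛ _) ?_
  exact ((hL.comp (tendsto_pow_atTop_atTop_of_one_lt (α := ℕ) one_lt_two)).const_add 1).congr
    fun m => (toReal_expMeasure_gridUnion v ha hb hΛ _).symm

theorem stmt_7_general (d : ℕ) (v : Fin d → ℝ) (Λ : ℝ) (hΛ : 0 ≤ Λ)
    (a b : ℝ) (ha : a = ∑ i, v i) (hb : b = ∑ i, max 0 (-(v i))) :
    (a = 0 →
      ∫ x : Fin d → ℝ,
        Set.indicator {x : Fin d → ℝ | ∃ t ∈ Set.Icc (0:ℝ) Λ, ∀ i, x i < -t * v i}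
          (fun x => Real.exp (∑ i, x i)) x
        = 1 + Λ * b) ∧
    (0 < a →
      ∫ x : Fin d → ℝ,
        Set.indicator {x : Fin d → ℝ | ∃ t ∈ Set.Icc (0:ℝ) Λ, ∀ i, x i < -t * v i}
          (fun x => Real.exp (∑ i, x i)) x
        = 1 + ((1 - Real.exp (-a * Λ)) / a) * b) := by
  refine ⟨fun ha0 => ?_, fun hapos => ?_⟩
  · subst ha0
    exact integral_indicator_exp_sum_eq_one_add v ha hb hΛ (tendsto_gridExcess_zero b Λ)
  · exact integral_indicator_exp_sum_eq_one_add v ha hb hΛ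
      (tendsto_gridExcess_of_ne_zero hapos.ne' b Λ)

/-- Value of `∫_{ℝ^d} e^{1ᵀx} 1{∃ t ∈ [0,Λ] : x < −t v} dx` when `a = Σᵢ vᵢ ≥ 0`:
it equals `1 + Λ b` if `a = 0` and `1 + ((1 − e^{−aΛ})/a) b` if `a > 0`, where
`b = Σᵢ max(0, −vᵢ)`. -/
theorem stmt_7 (d : ℕ) (v : Fin d → ℝ) (Λ : ℝ) (hΛ : 0 ≤ Λ)
    (a b : ℝ) (ha : a = ∑ i, v i) (ha0 : 0 ≤ a) (hb : b = ∑ i, max 0 (-(v i))) :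
    (a = 0 →
      ∫ x : Fin d → ℝ,
        Set.indicator {x : Fin d → ℝ | ∃ t ∈ Set.Icc (0:ℝ) Λ, ∀ i, x i < -t * v i}
          (fun x => Real.exp (∑ i, x i)) x
        = 1 + Λ * b) ∧
    (0 < a →
      ∫ x : Fin d → ℝ,
        Set.indicator {x : Fin d → ℝ | ∃ t ∈ Set.Icc (0:ℝ) Λ, ∀ i, x i < -t * v i}
          (fun x => Real.exp (∑ i, x i)) x
        = 1 + ((1 - Real.exp (-a * Λ)) / a) * b) :=
  stmt_7_general d v Λ hΛ a b ha hb
end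

section
/- Let Σ be a d×d symmetric positive definite matrix and b ∈ ℝ^d with at least one positive component. Let N be a centered Gaussian vector in ℝ^d with covariance Σ, let b̃ solve min_{x ≥ b} x^⊤ Σ^{-1} x, and put σ_b^2 = 1/(b̃^⊤ Σ^{-1} b̃). Then for all u > 0, P(N > u b componentwise) ≤ exp(−u^2/(2 σ_b^2)). -/
/-! Σ⁻¹ is symmetric, so the minimizer `b̃` of `xᵀΣ⁻¹x` over the convex box `{x ≥ b}` satisfies
the first-order condition `yᵀΣ⁻¹b̃ ≥ b̃ᵀΣ⁻¹b̃ = q` for every feasible `y`. Taking `y = b̃ + eᵢ`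
shows `w = Σ⁻¹b̃ ≥ 0`, and taking `y = b` gives `wᵀb ≥ q`. Hence `N > u b` forces `wᵀN ≥ u q`,
while `wᵀN` is a centered Gaussian of variance `wᵀΣw = q`, so the Chernoff bound gives
`exp (-(u q)² / (2 q)) = exp (-u² / (2 σ_b²))`. -/

open MeasureTheory Matrix ProbabilityTheory Filter Topology

lemma nonneg_of_forall_mul_add_sq_nonneg {c D : ℝ}
    (h : ∀ t ∈ Set.Ioc (0 : ℝ) 1, 0 ≤ t * c + t ^ 2 * D) : 0 ≤ c := by
  have hlim : Tendsto (fun t => c + t * D) (𝓝[>] 0) (𝓝 c) := by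
    have := (by fun_prop : Continuous fun t : ℝ => c + t * D).tendsto' 0 c (by simp)
    exact this.mono_left nhdsWithin_le_nhds
  refine ge_of_tendsto hlim ?_
  filter_upwards [Ioc_mem_nhdsGT zero_lt_one] with t ht
  have := h t ht
  have : 0 ≤ t * (c + t * D) := by linarith
  exact nonneg_of_mul_nonneg_right this ht.1

namespace Matrix

variable {ι : Type*} [Fintype ι] {T : Matrix ι ι ℝ}

lemma IsSymm.dotProduct_mulVec_comm (hT : T.IsSymm) (x y : ι → ℝ) :
    x ⬝ᵥ (T *ᵥ y) = y ⬝ᵥ (T *ᵥ x) := by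
  rw [dotProduct_mulVec, ← mulVec_transpose, hT.eq, dotProduct_comm]

lemma IsSymm.quadForm_add_smul (hT : T.IsSymm) (x z : ι → ℝ) (t : ℝ) :
    (x + t • z) ⬝ᵥ (T *ᵥ (x + t • z)) =
      x ⬝ᵥ (T *ᵥ x) + t * (2 * (z ⬝ᵥ (T *ᵥ x))) + t ^ 2 * (z ⬝ᵥ (T *ᵥ z)) := by
  simp only [mulVec_add, mulVec_smul, add_dotProduct, dotProduct_add, smul_dotProduct,
    dotProduct_smul, smul_eq_mul, hT.dotProduct_mulVec_comm x z]
  ring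

lemma IsSymm.quadForm_le_dotProduct_mulVec_of_isMinOn (hT : T.IsSymm) {K : Set (ι → ℝ)}
    (hK : Convex ℝ K) {x y : ι → ℝ} (hx : x ∈ K) (hy : y ∈ K)
    (hmin : IsMinOn (fun z => z ⬝ᵥ (T *ᵥ z)) K x) :
    x ⬝ᵥ (T *ᵥ x) ≤ y ⬝ᵥ (T *ᵥ x) := by
  have hslope : 0 ≤ 2 * ((y - x) ⬝ᵥ (T *ᵥ x)) := by
    refine nonneg_of_forall_mul_add_sq_nonneg (D := (y - x) ⬝ᵥ (T *ᵥ (y - x))) fun t ht => ?_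
    have := isMinOn_iff.1 hmin _ (hK.add_smul_sub_mem hx hy ⟨ht.1.le, ht.2⟩)
    beta_reduce at this
    rw [hT.quadForm_add_smul] at this
    linarith
  rw [sub_dotProduct] at hslope
  linarith

lemma IsSymm.mulVec_nonneg_of_isMinOn_Ici (hT : T.IsSymm) {b x : ι → ℝ} (hx : b ≤ x)
    (hmin : IsMinOn (fun z => z ⬝ᵥ (T *ᵥ z)) (Set.Ici b) x) : 0 ≤ T *ᵥ x := by
  classical
  intro i
  have := hT.quadForm_le_dotProduct_mulVec_of_isMinOn (convex_Ici b) hx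
    (le_add_of_le_of_nonneg hx (Pi.single_nonneg.2 zero_le_one) : b ≤ x + Pi.single i 1) hmin
  rw [add_dotProduct, single_dotProduct, one_mul] at this
  simpa using this

end Matrix

lemma hasSubgaussianMGF_of_map_eq_gaussianReal {Ω : Type*} [MeasurableSpace Ω] {P : Measure Ω}
    [IsProbabilityMeasure P] {X : Ω → ℝ} {v : NNReal} (hX : P.map X = gaussianReal 0 v) :
    HasSubgaussianMGF X v P where
  integrable_exp_mul t := by
    rw [← mgf_pos_iff, mgf_gaussianReal hX]
    exact Real.exp_pos _
  mgf_le t := by simp [mgf_gaussianReal hX]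

theorem stmt_13_general {Ω : Type*} [MeasurableSpace Ω] (P : Measure Ω) [IsProbabilityMeasure P]
    (d : ℕ) (S : Matrix (Fin d) (Fin d) ℝ) (hS : S.PosDef)
    (N : Ω → Fin d → ℝ)
    (hGauss : ∀ l : Fin d → ℝ,
      P.map (fun ω => l ⬝ᵥ N ω) = ProbabilityTheory.gaussianReal 0 (l ⬝ᵥ (S *ᵥ l)).toNNReal)
    (b : Fin d → ℝ)
    (btil : Fin d → ℝ) (hbtil : (∀ i, b i ≤ btil i) ∧
      ∀ y : Fin d → ℝ, (∀ i, b i ≤ y i) →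
        btil ⬝ᵥ (S⁻¹ *ᵥ btil) ≤ y ⬝ᵥ (S⁻¹ *ᵥ y))
    (σb2 : ℝ) (hσ : σb2 = 1 / (btil ⬝ᵥ (S⁻¹ *ᵥ btil)))
    (u : ℝ) (hu : 0 < u) :
    (P {ω | ∀ i, u * b i < N ω i}).toReal ≤ Real.exp (-(u ^ 2) / (2 * σb2)) := by
  obtain ⟨hble, hmin⟩ := hbtil
  replace hmin : IsMinOn (fun y => y ⬝ᵥ (S⁻¹ *ᵥ y)) (Set.Ici b) btil := hmin
  have hT : S⁻¹.IsSymm := isHermitian_iff_isSymm.1 hS.inv.isHermitian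
  set w := S⁻¹ *ᵥ btil
  set q := btil ⬝ᵥ w
  have hw : 0 ≤ w := hT.mulVec_nonneg_of_isMinOn_Ici hble hmin
  have hqb : q ≤ b ⬝ᵥ w :=
    hT.quadForm_le_dotProduct_mulVec_of_isMinOn (convex_Ici b) hble Set.self_mem_Ici hmin
  have hq : 0 ≤ q := by simpa using hS.inv.posSemidef.dotProduct_mulVec_nonneg btil
  have hvar : w ⬝ᵥ (S *ᵥ w) = q := by
    rw [mulVec_mulVec, mul_nonsing_inv _ ((isUnit_iff_isUnit_det S).1 hS.isUnit), one_mulVec,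
      dotProduct_comm]
  have hsub : HasSubgaussianMGF (fun ω => w ⬝ᵥ N ω) q.toNNReal P :=
    hasSubgaussianMGF_of_map_eq_gaussianReal (hvar ▸ hGauss w)
  have hincl : {ω | ∀ i, u * b i < N ω i} ⊆ {ω | u * q ≤ w ⬝ᵥ N ω} := fun ω hω =>
    calc u * q ≤ u * (b ⬝ᵥ w) := by gcongr
      _ = w ⬝ᵥ (u • b) := by rw [dotProduct_smul, dotProduct_comm, smul_eq_mul]
      _ ≤ w ⬝ᵥ N ω := dotProduct_le_dotProduct_of_nonneg_left (fun i => (hω i).le) hw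
  calc (P {ω | ∀ i, u * b i < N ω i}).toReal ≤ P.real {ω | u * q ≤ w ⬝ᵥ N ω} :=
        measureReal_mono hincl
    _ ≤ Real.exp (-(u * q) ^ 2 / (2 * q.toNNReal)) := hsub.measure_ge_le (by positivity)
    _ = Real.exp (-(u ^ 2) / (2 * σb2)) := by
        rw [Real.coe_toNNReal _ hq, hσ]
        rcases hq.eq_or_lt with hq0 | hq0
        · simp [← hq0] -- both exponents are `0`, by `x / 0 = 0`
        · field_simp

/-- Borell-type bound for a centered Gaussian vector `N` with covariance `Σ`:
`P(N > u b) ≤ exp(−u²/(2σ_b²))` for `u > 0`, where `σ_b² = 1/(b̃ᵀ Σ⁻¹ b̃)` and `b̃`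
solves the quadratic program `min_{x ≥ b} xᵀ Σ⁻¹ x`. -/
theorem stmt_13 {Ω : Type*} [MeasurableSpace Ω] (P : Measure Ω) [IsProbabilityMeasure P]
    (d : ℕ) (S : Matrix (Fin d) (Fin d) ℝ) (hS : S.PosDef) (hsymm : S.IsSymm)
    (N : Ω → Fin d → ℝ) (hmeas : Measurable N)
    (hGauss : ∀ l : Fin d → ℝ,
      P.map (fun ω => l ⬝ᵥ N ω) = ProbabilityTheory.gaussianReal 0 (l ⬝ᵥ (S *ᵥ l)).toNNReal)
    (b : Fin d → ℝ) (hb : ∃ i, 0 < b i)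
    (btil : Fin d → ℝ) (hbtil : (∀ i, b i ≤ btil i) ∧
      ∀ y : Fin d → ℝ, (∀ i, b i ≤ y i) →
        btil ⬝ᵥ (S⁻¹ *ᵥ btil) ≤ y ⬝ᵥ (S⁻¹ *ᵥ y))
    (σb2 : ℝ) (hσ : σb2 = 1 / (btil ⬝ᵥ (S⁻¹ *ᵥ btil)))
    (u : ℝ) (hu : 0 < u) :
    (P {ω | ∀ i, u * b i < N ω i}).toReal ≤ Real.exp (-(u ^ 2) / (2 * σb2)) :=
  stmt_13_general P d S hS N hGauss b btil hbtil σb2 hσ u hu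
end

section
/- Let H be a d×d real matrix whose eigenvalues all have positive real part, and let Σ be a symmetric positive definite d×d matrix such that y^⊤ H Σ y > 0 for all nonzero y ∈ ℝ^d. Define for t ∈ (0,1] the function σ^2(t) = 1 / min_{x ≥ b} x^⊤ (t^H Σ t^{H^⊤})^{-1} x, where b ∈ ℝ^d has at least one positive component and t^H = exp(H log t). Then the derivative-based first-order expansion gives σ^2(s) − σ^2(t) > 0 for t < s near any s ∈ (0,1], i.e., σ^2 is strictly increasing on (0,1], provided the quadratic programming solution map is (locally Lipschitz) continuous in t. -/
/-!
For `t > 0`, `Σ(t) = exp(u H) Σ exp(u H)ᵀ` with `u = log t`, and the derivative of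
`u ↦ yᵀ Σ(exp u) y` is `2 zᵀ (H Σ) z` with `z = exp(u H)ᵀ y ≠ 0`; so `Σ(t)` increases strictly in the
Loewner order. Inversion reverses this strictly, because `vᵀ A⁻¹ v = max_w (2 wᵀv - wᵀ A w)`.
For `t < s` the minimum at `s` is then at most the value at `s` of the minimiser `x_t` for `t`,
which is strictly below the minimum at `t` since `x_t ≥ b` is nonzero.
-/

open Matrix Set

namespace Matrix

variable {n : Type*} [Fintype n]

theorem dotProduct_transpose_mulVec_self (M : Matrix n n ℝ) (z : n → ℝ) :
    z ⬝ᵥ (Mᵀ *ᵥ z) = z ⬝ᵥ (M *ᵥ z) := by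
  rw [mulVec_transpose, dotProduct_comm, ← dotProduct_mulVec]

theorem dotProduct_mul_mul_transpose_mulVec (E M : Matrix n n ℝ) (y : n → ℝ) :
    y ⬝ᵥ ((E * M * Eᵀ) *ᵥ y) = (Eᵀ *ᵥ y) ⬝ᵥ (M *ᵥ (Eᵀ *ᵥ y)) := by
  rw [← mulVec_mulVec, ← mulVec_mulVec, dotProduct_mulVec, mulVec_transpose]

variable [DecidableEq n]

theorem PosDef.two_mul_dotProduct_sub_le {A : Matrix n n ℝ} (hA : A.PosDef) (v w : n → ℝ) :
    2 * (w ⬝ᵥ v) - w ⬝ᵥ (A *ᵥ w) ≤ v ⬝ᵥ (A⁻¹ *ᵥ v) := by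
  set z := A⁻¹ *ᵥ v
  have hz : A *ᵥ z = v := by
    rw [mulVec_mulVec, mul_nonsing_inv _ ((isUnit_iff_isUnit_det _).mp hA.isUnit), one_mulVec]
  have hzw : z ⬝ᵥ (A *ᵥ w) = w ⬝ᵥ v := by
    rw [dotProduct_mulVec, ← mulVec_transpose, ← conjTranspose_eq_transpose_of_trivial,
      hA.isHermitian.eq, hz, dotProduct_comm]
  have hnonneg := hA.posSemidef.dotProduct_mulVec_nonneg (z - w)
  simp only [star_trivial, mulVec_sub, sub_dotProduct, dotProduct_sub, hz, hzw] at hnonneg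
  rw [dotProduct_comm v z]
  linarith

theorem PosDef.dotProduct_inv_mulVec_lt {A B : Matrix n n ℝ} (hA : A.PosDef) (hB : IsUnit B)
    (hAB : ∀ x ≠ 0, x ⬝ᵥ (A *ᵥ x) < x ⬝ᵥ (B *ᵥ x)) {v : n → ℝ} (hv : v ≠ 0) :
    v ⬝ᵥ (B⁻¹ *ᵥ v) < v ⬝ᵥ (A⁻¹ *ᵥ v) := by
  set w := B⁻¹ *ᵥ v
  have hw : B *ᵥ w = v := by
    rw [mulVec_mulVec, mul_nonsing_inv _ ((isUnit_iff_isUnit_det _).mp hB), one_mulVec]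
  have hw0 : w ≠ 0 := fun h => hv (by rw [← hw, h, mulVec_zero])
  calc v ⬝ᵥ w = 2 * (w ⬝ᵥ v) - w ⬝ᵥ (B *ᵥ w) := by rw [hw, dotProduct_comm]; ring
    _ < 2 * (w ⬝ᵥ v) - w ⬝ᵥ (A *ᵥ w) := by linarith [hAB w hw0]
    _ ≤ v ⬝ᵥ (A⁻¹ *ᵥ v) := hA.two_mul_dotProduct_sub_le v w

open NormedSpace

theorem PosDef.exp_mul_mul_transpose {S : Matrix n n ℝ} (hS : S.PosDef) (H : Matrix n n ℝ) :
    (exp H * S * (exp H)ᵀ).PosDef := by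
  have := (IsUnit.posDef_star_right_conjugate_iff (x := S) (isUnit_exp H)).mpr hS
  rwa [star_eq_conjTranspose, conjTranspose_eq_transpose_of_trivial] at this

open scoped Norms.Operator in
theorem hasDerivAt_exp_smul_mul_mul_transpose (H S : Matrix n n ℝ) (u : ℝ) :
    HasDerivAt (fun u : ℝ => exp (u • H) * S * (exp (u • H))ᵀ)
      (exp (u • H) * (H * S + S * Hᵀ) * (exp (u • H))ᵀ) u := by
  simp_rw [← exp_transpose, transpose_smul]
  refine (((hasDerivAt_exp_smul_const H u).mul_const S).mul
    (hasDerivAt_exp_smul_const' Hᵀ u)).congr_deriv ?_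
  noncomm_ring

open scoped Norms.Operator in
theorem hasDerivAt_dotProduct_exp_smul_mul_mul_transpose_mulVec (H : Matrix n n ℝ)
    {S : Matrix n n ℝ} (hS : S.IsSymm) (y : n → ℝ) (u : ℝ) :
    HasDerivAt (fun u : ℝ => y ⬝ᵥ ((exp (u • H) * S * (exp (u • H))ᵀ) *ᵥ y))
      (2 * ((exp (u • H))ᵀ *ᵥ y) ⬝ᵥ ((H * S) *ᵥ ((exp (u • H))ᵀ *ᵥ y))) u := by
  let q : Matrix n n ℝ →L[ℝ] ℝ := LinearMap.toContinuousLinearMap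
    { toFun := fun M => y ⬝ᵥ (M *ᵥ y)
      map_add' := fun M N => by rw [add_mulVec, dotProduct_add]
      map_smul' := fun c M => by rw [smul_mulVec, dotProduct_smul]; rfl }
  refine (q.hasFDerivAt.comp_hasDerivAt u
    (hasDerivAt_exp_smul_mul_mul_transpose H S u)).congr_deriv ?_
  have hSH : S * Hᵀ = (H * S)ᵀ := by rw [transpose_mul, hS.eq]
  change y ⬝ᵥ ((exp (u • H) * (H * S + S * Hᵀ) * (exp (u • H))ᵀ) *ᵥ y) = _
  rw [dotProduct_mul_mul_transpose_mulVec, hSH, add_mulVec, dotProduct_add,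
    dotProduct_transpose_mulVec_self, two_mul]

theorem strictMono_dotProduct_exp_smul_mul_mul_transpose_mulVec {H S : Matrix n n ℝ}
    (hS : S.IsSymm) (hHS : ∀ z ≠ 0, 0 < z ⬝ᵥ ((H * S) *ᵥ z)) {y : n → ℝ} (hy : y ≠ 0) :
    StrictMono fun u : ℝ => y ⬝ᵥ ((exp (u • H) * S * (exp (u • H))ᵀ) *ᵥ y) := by
  refine strictMono_of_deriv_pos fun u => ?_
  rw [(hasDerivAt_dotProduct_exp_smul_mul_mul_transpose_mulVec H hS y u).deriv]
  have hz : (exp (u • H))ᵀ *ᵥ y ≠ 0 := fun h =>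
    hy (mulVec_injective_of_isUnit ((isUnit_transpose _).mpr (isUnit_exp (u • H)))
      (by rw [h, mulVec_zero]))
  exact mul_pos two_pos (hHS _ hz)

end Matrix

theorem stmt_15_general (d : ℕ) (H S : Matrix (Fin d) (Fin d) ℝ)
    (hS : S.PosDef) (hSsymm : S.IsSymm)
    (hHS : ∀ y : Fin d → ℝ, y ≠ 0 → 0 < y ⬝ᵥ ((H * S) *ᵥ y))
    (b : Fin d → ℝ) (hb : ∃ i, 0 < b i)
    (St : ℝ → Matrix (Fin d) (Fin d) ℝ)
    (hSt : ∀ t, St t = (NormedSpace.exp (Real.log t • H)) * S * (NormedSpace.exp (Real.log t • H))ᵀ)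
    (sol : ℝ → Fin d → ℝ)
    (hsolmin : ∀ t ∈ Ioc (0:ℝ) 1, (∀ i, b i ≤ sol t i) ∧
      ∀ y : Fin d → ℝ, (∀ i, b i ≤ y i) →
        sol t ⬝ᵥ ((St t)⁻¹ *ᵥ sol t) ≤ y ⬝ᵥ ((St t)⁻¹ *ᵥ y)) :
    StrictMonoOn (fun t => 1 / (sol t ⬝ᵥ ((St t)⁻¹ *ᵥ sol t))) (Ioc (0:ℝ) 1) := by
  have hPD (t : ℝ) : (St t).PosDef := hSt t ▸ hS.exp_mul_mul_transpose _
  have hStlt {t s : ℝ} (ht : 0 < t) (hts : t < s) (y : Fin d → ℝ) (hy : y ≠ 0) :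
      y ⬝ᵥ (St t *ᵥ y) < y ⬝ᵥ (St s *ᵥ y) := by
    simpa only [hSt] using strictMono_dotProduct_exp_smul_mul_mul_transpose_mulVec hSsymm hHS hy
      (Real.log_lt_log ht hts)
  have hsol_ne {t : ℝ} (ht : t ∈ Ioc 0 1) : sol t ≠ 0 := by
    obtain ⟨i, hi⟩ := hb
    intro h
    have := (hsolmin t ht).1 i
    rw [h, Pi.zero_apply] at this
    linarith
  intro t ht s hs hts
  refine one_div_lt_one_div_of_lt ((hPD s).inv.dotProduct_mulVec_pos (hsol_ne hs)) ?_
  calc sol s ⬝ᵥ ((St s)⁻¹ *ᵥ sol s) ≤ sol t ⬝ᵥ ((St s)⁻¹ *ᵥ sol t) :=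
        (hsolmin s hs).2 _ (hsolmin t ht).1
    _ < sol t ⬝ᵥ ((St t)⁻¹ *ᵥ sol t) :=
        (hPD t).dotProduct_inv_mulVec_lt (hPD s).isUnit (hStlt ht.1 hts) (hsol_ne ht)

/-- For an operator fBm covariance `Σ(t) = t^H Σ t^{Hᵀ}` with `t^H = exp(H log t)`,
if every eigenvalue of `H` has positive real part and `yᵀ H Σ y > 0` for all `y ≠ 0`,
then the generalized variance function `σ²(t) = 1/min_{x ≥ b} xᵀ Σ(t)⁻¹ x` is strictly
increasing on `(0,1]`, provided the quadratic-programming solution map `t ↦ sol t` is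
continuous on `(0,1]`. -/
theorem stmt_15 (d : ℕ) (H S : Matrix (Fin d) (Fin d) ℝ)
    (hS : S.PosDef) (hSsymm : S.IsSymm)
    (heig : ∀ μ : ℂ, μ ∈ spectrum ℂ (H.map (Complex.ofReal : ℝ → ℂ)) → 0 < μ.re)
    (hHS : ∀ y : Fin d → ℝ, y ≠ 0 → 0 < y ⬝ᵥ ((H * S) *ᵥ y))
    (b : Fin d → ℝ) (hb : ∃ i, 0 < b i)
    (St : ℝ → Matrix (Fin d) (Fin d) ℝ)
    (hSt : ∀ t, St t = (NormedSpace.exp (Real.log t • H)) * S * (NormedSpace.exp (Real.log t • H))ᵀ)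
    (sol : ℝ → Fin d → ℝ)
    (hsolcont : ContinuousOn sol (Ioc (0:ℝ) 1))
    (hsolmin : ∀ t ∈ Ioc (0:ℝ) 1, (∀ i, b i ≤ sol t i) ∧
      ∀ y : Fin d → ℝ, (∀ i, b i ≤ y i) →
        sol t ⬝ᵥ ((St t)⁻¹ *ᵥ sol t) ≤ y ⬝ᵥ ((St t)⁻¹ *ᵥ y)) :
    StrictMonoOn (fun t => 1 / (sol t ⬝ᵥ ((St t)⁻¹ *ᵥ sol t))) (Ioc (0:ℝ) 1) :=
  stmt_15_general d H S hS hSsymm hHS b hb St hSt sol hsolmin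
end
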